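/- (Claim 1: SO1 implies SO2.) Suppose the condition SO1 holds for the probability measure μ. Then the condition SO2 also holds: for all events A, B and all regions 𝒜 ⊇ dom(A), ℬ ⊇ dom(B) with 𝒜 ♮ ℬ, μ(A ∩ B | C) = μ(A | C) μ(B | C) for every full specification C of the joint past 𝒫₂ = (J⁻(𝒜) ∪ J⁻(ℬ)) \ (𝒜 ∪ ℬ) with μ(C) > 0. -/

import Mathlib

open Set MeasureTheory

/-- A least-domain-of-decidability function `dom : Σ → 𝒫(𝕊)`, with its four
defining properties (i)–(iv).  Events are the measurable subsets of `Ω`. -/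
structure DomSystem (Ω S : Type*) [MeasurableSpace Ω] where
  dom : Set Ω → Set S
  /-- (i): for a countable family of events whose domains are pairwise disjoint,
  the domain of the intersection is the (disjoint) union of the domains. -/
  prop_i : ∀ Λ : Set (Set Ω), Λ.Countable → (∀ X ∈ Λ, MeasurableSet X) →
    (∀ X ∈ Λ, ∀ Y ∈ Λ, X ≠ Y → Disjoint (dom X) (dom Y)) →
    dom (⋂₀ Λ) = ⋃ X ∈ Λ, dom X
  /-- (ii): for a countable family of events all having the same domain `D`,
  the domain of the intersection is contained in `D`. -/
  prop_ii : ∀ (Λ : Set (Set Ω)) (D : Set S), Λ.Countable →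
    (∀ X ∈ Λ, MeasurableSet X) → (∀ X ∈ Λ, dom X = D) → dom (⋂₀ Λ) ⊆ D
  /-- (iii): complementation preserves the domain. -/
  prop_iii : ∀ X : Set Ω, MeasurableSet X → dom Xᶜ = dom X
  /-- (iv): an event whose domain is a disjoint union `𝒳 ⊔ 𝒴` lies in the σ-algebra
  generated by `Γ(𝒳) ∪ Γ(𝒴)`, where `Γ(𝒳) = {X ∈ Σ : dom X ⊆ 𝒳}`. -/
  prop_iv : ∀ Z : Set Ω, MeasurableSet Z → ∀ 𝒳 𝒴 : Set S, Disjoint 𝒳 𝒴 →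
    dom Z = 𝒳 ∪ 𝒴 →
    MeasurableSet[MeasurableSpace.generateFrom
      ({X : Set Ω | MeasurableSet X ∧ dom X ⊆ 𝒳} ∪
        {X : Set Ω | MeasurableSet X ∧ dom X ⊆ 𝒴})] Z

/-- A full specification of a region `R ⊆ 𝕊`: a nonempty event `F` with `dom F ⊆ R`
that decides every event decidable within `R`. -/
def IsFullSpec {Ω S : Type*} [MeasurableSpace Ω] (dom : Set Ω → Set S)
    (R : Set S) (F : Set Ω) : Prop :=
  MeasurableSet F ∧ F.Nonempty ∧ dom F ⊆ R ∧
    ∀ X : Set Ω, MeasurableSet X → dom X ⊆ R → F ⊆ X ∨ F ⊆ Xᶜ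

/-- The restriction `Γ_R(A)` of an event `A` to a region `R`: the intersection of all
events `Z` with `A ⊆ Z` and `dom Z ⊆ R`. -/
def restr {Ω S : Type*} [MeasurableSpace Ω] (dom : Set Ω → Set S)
    (R : Set S) (A : Set Ω) : Set Ω :=
  ⋂₀ {Z : Set Ω | MeasurableSet Z ∧ A ⊆ Z ∧ dom Z ⊆ R}

/-- The causal past `J⁻(𝒳)` of a region in the causal structure `𝕊`. -/
def causalPast {S : Type*} [PartialOrder S] (𝒳 : Set S) : Set S :=
  {s | ∃ x ∈ 𝒳, s ≤ x}

/-- Two regions are spacelike, `𝒳 ♮ 𝒴`, if `J⁻(𝒳) ∩ 𝒴 = ∅` and `J⁻(𝒴) ∩ 𝒳 = ∅`. -/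
def Spacelike {S : Type*} [PartialOrder S] (𝒳 𝒴 : Set S) : Prop :=
  causalPast 𝒳 ∩ 𝒴 = ∅ ∧ causalPast 𝒴 ∩ 𝒳 = ∅

/-- Screening off, SO1: for all events `A`, `B` occurring in spacelike regions `𝒜 ♮ ℬ`,
`μ(A ∩ B | C) = μ(A | C)·μ(B | C)` for every full specification `C` of the mutual past
`𝒫₁ = J⁻(𝒜) ∩ J⁻(ℬ)` with `μ C > 0`. -/
def SO1 {Ω S : Type*} [MeasurableSpace Ω] [PartialOrder S]
    (dom : Set Ω → Set S) (μ : MeasureTheory.Measure Ω) : Prop :=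
  ∀ A B : Set Ω, MeasurableSet A → MeasurableSet B →
    ∀ 𝒜 ℬ : Set S, dom A ⊆ 𝒜 → dom B ⊆ ℬ → Spacelike 𝒜 ℬ →
      ∀ C : Set Ω, IsFullSpec dom (causalPast 𝒜 ∩ causalPast ℬ) C → 0 < μ C →
        μ ((A ∩ B) ∩ C) / μ C = (μ (A ∩ C) / μ C) * (μ (B ∩ C) / μ C)

/-- Screening off, SO2: as SO1, but conditioning on full specifications of the joint
past `𝒫₂ = (J⁻(𝒜) ∪ J⁻(ℬ)) \ (𝒜 ∪ ℬ)`. -/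
def SO2 {Ω S : Type*} [MeasurableSpace Ω] [PartialOrder S]
    (dom : Set Ω → Set S) (μ : MeasureTheory.Measure Ω) : Prop :=
  ∀ A B : Set Ω, MeasurableSet A → MeasurableSet B →
    ∀ 𝒜 ℬ : Set S, dom A ⊆ 𝒜 → dom B ⊆ ℬ → Spacelike 𝒜 ℬ →
      ∀ C : Set Ω,
        IsFullSpec dom ((causalPast 𝒜 ∪ causalPast ℬ) \ (𝒜 ∪ ℬ)) C → 0 < μ C →
          μ ((A ∩ B) ∩ C) / μ C = (μ (A ∩ C) / μ C) * (μ (B ∩ C) / μ C)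

/-! A full specification `C` of the joint past splits as `C = C𝒳 ∩ C𝒴 ∩ C𝒵` along the
partition of the joint past into the part `𝒳` seen only by `𝒜`, the part `𝒴` seen only by `ℬ`
and the mutual past `𝒵`: by (iv), an event that decides every event decidable in `𝒳`, in `𝒴`
and in `𝒵` decides every event decidable in their union. The enlarged regions `𝒜 ∪ 𝒳` and `ℬ ∪ 𝒴` are still spacelike, with
mutual past `𝒵`, and `C𝒵` is a full specification of `𝒵`. SO1 for these enlarged regions,
conditioned on `C𝒵` and applied to the pairs `(A ∩ C𝒳, B ∩ C𝒴)`, `(A ∩ C𝒳, C𝒴)`, `(C𝒳, B ∩ C𝒴)`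
and `(C𝒳, C𝒴)`, expresses `μ(A ∩ B ∩ C)`, `μ(A ∩ C)`, `μ(B ∩ C)` and `μ(C)` through the
measures of `A ∩ C𝒳 ∩ C𝒵`, `B ∩ C𝒴 ∩ C𝒵`, `C𝒳 ∩ C𝒵` and `C𝒴 ∩ C𝒵`; comparing the two
products gives `μ(A ∩ B ∩ C) μ(C) = μ(A ∩ C) μ(B ∩ C)`. -/

open scoped ENNReal

section CausalStructure

variable {S : Type*} [PartialOrder S] {𝒜 ℬ : Set S}

lemma causalPast_union_of_subset {𝒳 : Set S} (h : 𝒳 ⊆ causalPast 𝒜) :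
    causalPast (𝒜 ∪ 𝒳) = causalPast 𝒜 := by
  refine Subset.antisymm ?_ fun s ⟨a, ha, hsa⟩ => ⟨a, Or.inl ha, hsa⟩
  rintro s ⟨x, hx | hx, hsx⟩
  · exact ⟨x, hx, hsx⟩
  · obtain ⟨a, ha, hxa⟩ := h hx
    exact ⟨a, ha, hsx.trans hxa⟩

def exclusivePast (𝒜 ℬ : Set S) : Set S :=
  causalPast 𝒜 \ (𝒜 ∪ causalPast ℬ)

variable (𝒜 ℬ) in
lemma causalPast_union_exclusivePast :
    causalPast (𝒜 ∪ exclusivePast 𝒜 ℬ) = causalPast 𝒜 :=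
  causalPast_union_of_subset sdiff_subset

variable (𝒜 ℬ) in
lemma disjoint_self_exclusivePast : Disjoint 𝒜 (exclusivePast 𝒜 ℬ) :=
  disjoint_left.2 fun _ hs h => h.2 (Or.inl hs)

variable (𝒜 ℬ) in
lemma disjoint_exclusivePast_causalPast : Disjoint (exclusivePast 𝒜 ℬ) (causalPast ℬ) :=
  disjoint_left.2 fun _ h hs => h.2 (Or.inr hs)

lemma Spacelike.symm (h : Spacelike 𝒜 ℬ) : Spacelike ℬ 𝒜 :=
  ⟨h.2, h.1⟩

lemma Spacelike.disjoint (h : Spacelike 𝒜 ℬ) : Disjoint (causalPast 𝒜) ℬ :=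
  disjoint_iff_inter_eq_empty.2 h.1

lemma Spacelike.exclusivePast_union_mutualPast (h : Spacelike 𝒜 ℬ) :
    exclusivePast 𝒜 ℬ ∪ exclusivePast ℬ 𝒜 ∪ (causalPast 𝒜 ∩ causalPast ℬ) =
      (causalPast 𝒜 ∪ causalPast ℬ) \ (𝒜 ∪ ℬ) := by
  ext s
  have hAB : s ∈ causalPast 𝒜 → s ∉ ℬ := fun hs => disjoint_left.1 h.disjoint hs
  have hBA : s ∈ causalPast ℬ → s ∉ 𝒜 := fun hs => disjoint_left.1 h.symm.disjoint hs
  have hA : s ∈ 𝒜 → s ∈ causalPast 𝒜 := fun hs => ⟨s, hs, le_rfl⟩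
  have hB : s ∈ ℬ → s ∈ causalPast ℬ := fun hs => ⟨s, hs, le_rfl⟩
  simp only [exclusivePast, mem_union, mem_sdiff, mem_inter_iff]
  tauto

lemma disjoint_causalPast_union_exclusivePast (h : Disjoint (causalPast 𝒜) ℬ) :
    Disjoint (causalPast (𝒜 ∪ exclusivePast 𝒜 ℬ)) (ℬ ∪ exclusivePast ℬ 𝒜) := by
  rw [causalPast_union_exclusivePast]
  exact disjoint_union_right.2 ⟨h, (disjoint_exclusivePast_causalPast ℬ 𝒜).symm⟩

lemma Spacelike.union_exclusivePast (h : Spacelike 𝒜 ℬ) :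
    Spacelike (𝒜 ∪ exclusivePast 𝒜 ℬ) (ℬ ∪ exclusivePast ℬ 𝒜) :=
  ⟨disjoint_iff_inter_eq_empty.1 (disjoint_causalPast_union_exclusivePast h.disjoint),
    disjoint_iff_inter_eq_empty.1 (disjoint_causalPast_union_exclusivePast h.symm.disjoint)⟩

end CausalStructure

section Factorization

variable {Ω : Type*} [MeasurableSpace Ω] (μ : Measure Ω)

/-- Conditional independence of `A` and `B` given `C`, multiplied out by `μ C²`. -/
def FactorsGiven (A B C : Set Ω) : Prop :=
  μ (A ∩ B ∩ C) * μ C = μ (A ∩ C) * μ (B ∩ C)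

lemma ENNReal.div_eq_div_mul_div_iff {x a b z : ℝ≥0∞} (h0 : z ≠ 0) (htop : z ≠ ∞) :
    x / z = a / z * (b / z) ↔ x * z = a * b := by
  rw [← ENNReal.mul_left_inj (mul_ne_zero h0 h0) (ENNReal.mul_ne_top htop htop),
    ← mul_assoc, ENNReal.div_mul_cancel h0 htop, mul_mul_mul_comm,
    ENNReal.div_mul_cancel h0 htop, ENNReal.div_mul_cancel h0 htop]

variable {μ}

lemma div_eq_div_mul_div_iff_factorsGiven {A B C : Set Ω} (h0 : μ C ≠ 0) (htop : μ C ≠ ∞) :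
    μ (A ∩ B ∩ C) / μ C = μ (A ∩ C) / μ C * (μ (B ∩ C) / μ C) ↔ FactorsGiven μ A B C :=
  ENNReal.div_eq_div_mul_div_iff h0 htop

lemma FactorsGiven.inter {A B X Y Z : Set Ω} (h0 : μ Z ≠ 0) (htop : μ Z ≠ ∞)
    (hAB : FactorsGiven μ (A ∩ X) (B ∩ Y) Z) (hA : FactorsGiven μ (A ∩ X) Y Z)
    (hB : FactorsGiven μ X (B ∩ Y) Z) (hXY : FactorsGiven μ X Y Z) :
    FactorsGiven μ A B (X ∩ Y ∩ Z) := by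
  have eAB : A ∩ X ∩ (B ∩ Y) ∩ Z = A ∩ B ∩ (X ∩ Y ∩ Z) := by
    ext; simp only [mem_inter_iff]; tauto
  have eA : A ∩ X ∩ Y ∩ Z = A ∩ (X ∩ Y ∩ Z) := by
    ext; simp only [mem_inter_iff]; tauto
  have eB : X ∩ (B ∩ Y) ∩ Z = B ∩ (X ∩ Y ∩ Z) := by
    ext; simp only [mem_inter_iff]; tauto
  unfold FactorsGiven at *
  rw [eAB] at hAB
  rw [eA] at hA
  rw [eB] at hB
  rw [← ENNReal.mul_left_inj (mul_ne_zero h0 h0) (ENNReal.mul_ne_top htop htop)]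
  calc μ (A ∩ B ∩ (X ∩ Y ∩ Z)) * μ (X ∩ Y ∩ Z) * (μ Z * μ Z)
      = μ (A ∩ B ∩ (X ∩ Y ∩ Z)) * μ Z * (μ (X ∩ Y ∩ Z) * μ Z) := by ring
    _ = μ (A ∩ X ∩ Z) * μ (Y ∩ Z) * (μ (X ∩ Z) * μ (B ∩ Y ∩ Z)) := by rw [hAB, hXY]; ring
    _ = μ (A ∩ (X ∩ Y ∩ Z)) * μ (B ∩ (X ∩ Y ∩ Z)) * (μ Z * μ Z) := by rw [← hA, ← hB]; ring

end Factorization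

lemma subset_or_subset_compl_of_measurableSet_generateFrom {Ω : Type*} {E : Set Ω}
    {G : Set (Set Ω)} (hG : ∀ Z ∈ G, E ⊆ Z ∨ E ⊆ Zᶜ) {Z : Set Ω}
    (hZ : MeasurableSet[MeasurableSpace.generateFrom G] Z) : E ⊆ Z ∨ E ⊆ Zᶜ := by
  induction hZ with
  | basic Z hZ => exact hG Z hZ
  | empty => exact Or.inr (subset_univ _ |>.trans compl_empty.symm.subset)
  | compl W _ ih => rw [compl_compl]; exact ih.symm
  | iUnion f _ ih =>
    by_cases h : ∃ n, E ⊆ f n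
    · obtain ⟨n, hn⟩ := h
      exact Or.inl (hn.trans (subset_iUnion f n))
    · exact Or.inr (compl_iUnion f ▸ subset_iInter fun n =>
        (ih n).resolve_left (not_exists.1 h n))

def DecidesRegion {Ω S : Type*} [MeasurableSpace Ω] (dom : Set Ω → Set S) (R : Set S)
    (E : Set Ω) : Prop :=
  ∀ X : Set Ω, MeasurableSet X → dom X ⊆ R → E ⊆ X ∨ E ⊆ Xᶜ

section Domains

variable {Ω S : Type*} [MeasurableSpace Ω]

lemma subset_restr (dom : Set Ω → Set S) (R : Set S) (A : Set Ω) : A ⊆ restr dom R A :=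
  fun _ hx => mem_sInter.2 fun _ hZ => hZ.2.1 hx

lemma DecidesRegion.mono {dom : Set Ω → Set S} {R : Set S} {E E' : Set Ω}
    (h : DecidesRegion dom R E) (hE : E' ⊆ E) : DecidesRegion dom R E' :=
  fun X hX hXR => (h X hX hXR).imp hE.trans hE.trans

lemma IsFullSpec.eq_of_subset {dom : Set Ω → Set S} {R : Set S} {C E : Set Ω}
    (hC : IsFullSpec dom R C) (hCE : C ⊆ E) (hE : DecidesRegion dom R E) : E = C := by
  obtain ⟨x, hx⟩ := hC.2.1
  rcases hE C hC.1 hC.2.2.1 with h | h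
  · exact h.antisymm hCE
  · exact (h (hCE hx) hx).elim

namespace DomSystem

variable (D : DomSystem Ω S)

lemma dom_inter_of_disjoint {A B : Set Ω} (hA : MeasurableSet A) (hB : MeasurableSet B)
    (h : Disjoint (D.dom A) (D.dom B)) : D.dom (A ∩ B) = D.dom A ∪ D.dom B := by
  have := D.prop_i {A, B} ((countable_singleton B).insert A)
    (by rintro X (rfl | rfl) <;> assumption)
    (by rintro X (rfl | rfl) Y (rfl | rfl) hne <;>
          first | exact (hne rfl).elim | exact h | exact h.symm)
  rwa [sInter_pair, biUnion_pair] at this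

lemma dom_inter_subset_union {A B : Set Ω} {𝒳 𝒴 : Set S} (hA : MeasurableSet A)
    (hB : MeasurableSet B) (hA𝒳 : D.dom A ⊆ 𝒳) (hB𝒴 : D.dom B ⊆ 𝒴) (h : Disjoint 𝒳 𝒴) :
    D.dom (A ∩ B) ⊆ 𝒳 ∪ 𝒴 := by
  rw [D.dom_inter_of_disjoint hA hB (h.mono hA𝒳 hB𝒴)]
  exact union_subset_union hA𝒳 hB𝒴

lemma decidesRegion_restr {R R' : Set S} {C : Set Ω} (hC : DecidesRegion D.dom R C)
    (hR' : R' ⊆ R) : DecidesRegion D.dom R' (restr D.dom R' C) := by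
  intro X hX hXR'
  rcases hC X hX (hXR'.trans hR') with h | h
  · exact Or.inl (sInter_subset_of_mem ⟨hX, h, hXR'⟩)
  · exact Or.inr (sInter_subset_of_mem ⟨hX.compl, h, D.prop_iii X hX ▸ hXR'⟩)

lemma decidesRegion_union {𝒳 𝒴 : Set S} {E : Set Ω} (h𝒳𝒴 : Disjoint 𝒳 𝒴)
    (h𝒳 : DecidesRegion D.dom 𝒳 E) (h𝒴 : DecidesRegion D.dom 𝒴 E) :
    DecidesRegion D.dom (𝒳 ∪ 𝒴) E := by
  intro Z hZ hZ𝒳𝒴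
  have hsplit : D.dom Z = (D.dom Z ∩ 𝒳) ∪ (D.dom Z ∩ 𝒴) := by
    rw [← inter_union_distrib_left, inter_eq_left.2 hZ𝒳𝒴]
  refine subset_or_subset_compl_of_measurableSet_generateFrom ?_ (D.prop_iv Z hZ _ _
    (h𝒳𝒴.mono inter_subset_right inter_subset_right) hsplit)
  rintro W (⟨hW, hW𝒳⟩ | ⟨hW, hW𝒴⟩)
  · exact h𝒳 W hW (hW𝒳.trans inter_subset_right)
  · exact h𝒴 W hW (hW𝒴.trans inter_subset_right)

lemma eq_inter_restr_of_isFullSpec {𝒳 𝒴 𝒵 : Set S} (h𝒳𝒴 : Disjoint 𝒳 𝒴)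
    (h𝒳𝒵 : Disjoint 𝒳 𝒵) (h𝒴𝒵 : Disjoint 𝒴 𝒵) {C : Set Ω}
    (hC : IsFullSpec D.dom (𝒳 ∪ 𝒴 ∪ 𝒵) C) :
    C = restr D.dom 𝒳 C ∩ restr D.dom 𝒴 C ∩ restr D.dom 𝒵 C := by
  set E := restr D.dom 𝒳 C ∩ restr D.dom 𝒴 C ∩ restr D.dom 𝒵 C
  have h𝒳 : DecidesRegion D.dom 𝒳 E :=
    (D.decidesRegion_restr hC.2.2.2 (subset_union_left.trans subset_union_left)).mono
      fun _ h => h.1.1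
  have h𝒴 : DecidesRegion D.dom 𝒴 E :=
    (D.decidesRegion_restr hC.2.2.2 (subset_union_right.trans subset_union_left)).mono
      fun _ h => h.1.2
  have h𝒵 : DecidesRegion D.dom 𝒵 E :=
    (D.decidesRegion_restr hC.2.2.2 subset_union_right).mono fun _ h => h.2
  refine (hC.eq_of_subset ?_ (D.decidesRegion_union (disjoint_union_left.2 ⟨h𝒳𝒵, h𝒴𝒵⟩)
    (D.decidesRegion_union h𝒳𝒴 h𝒳 h𝒴) h𝒵)).symm
  exact subset_inter (subset_inter (subset_restr ..) (subset_restr ..)) (subset_restr ..)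

lemma isFullSpec_restr {R R' : Set S} {C : Set Ω} (hC : IsFullSpec D.dom R C) (hR' : R' ⊆ R)
    (hmeas : MeasurableSet (restr D.dom R' C)) (hdom : D.dom (restr D.dom R' C) ⊆ R') :
    IsFullSpec D.dom R' (restr D.dom R' C) :=
  ⟨hmeas, hC.2.1.mono (subset_restr ..), hdom,
    D.decidesRegion_restr hC.2.2.2 hR'⟩

end DomSystem

end Domains

lemma SO1.factorsGiven {Ω S : Type*} [MeasurableSpace Ω] [PartialOrder S]
    {dom : Set Ω → Set S} {μ : Measure Ω} [IsFiniteMeasure μ] (h : SO1 dom μ) {𝒜 ℬ : Set S}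
    (hsp : Spacelike 𝒜 ℬ) {C : Set Ω} (hC : IsFullSpec dom (causalPast 𝒜 ∩ causalPast ℬ) C)
    (hC0 : μ C ≠ 0) {A B : Set Ω} (hA : MeasurableSet A) (hB : MeasurableSet B)
    (hA𝒜 : dom A ⊆ 𝒜) (hBℬ : dom B ⊆ ℬ) : FactorsGiven μ A B C :=
  (div_eq_div_mul_div_iff_factorsGiven hC0 (measure_ne_top μ C)).1
    (h A B hA hB 𝒜 ℬ hA𝒜 hBℬ hsp C hC (pos_iff_ne_zero.2 hC0))

theorem stmt8_general {Ω S : Type*} [MeasurableSpace Ω] [PartialOrder S]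
    (D : DomSystem Ω S) (μ : Measure Ω) [IsProbabilityMeasure μ]
    (hres : ∀ A : Set Ω, MeasurableSet A → ∀ R : Set S,
      MeasurableSet (restr D.dom R A) ∧ D.dom (restr D.dom R A) ⊆ R)
    (h1 : SO1 D.dom μ) : SO2 D.dom μ := by
  intro A B hA hB 𝒜 ℬ hA𝒜 hBℬ hsp C hC hpos
  set 𝒳 := exclusivePast 𝒜 ℬ
  set 𝒴 := exclusivePast ℬ 𝒜
  set 𝒵 := causalPast 𝒜 ∩ causalPast ℬ
  rw [← hsp.exclusivePast_union_mutualPast] at hC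
  have hC_eq := D.eq_inter_restr_of_isFullSpec
    ((disjoint_exclusivePast_causalPast 𝒜 ℬ).mono_right sdiff_subset)
    ((disjoint_exclusivePast_causalPast 𝒜 ℬ).mono_right inter_subset_right)
    ((disjoint_exclusivePast_causalPast ℬ 𝒜).mono_right inter_subset_left) hC
  set C𝒳 := restr D.dom 𝒳 C
  set C𝒴 := restr D.dom 𝒴 C
  set C𝒵 := restr D.dom 𝒵 C
  obtain ⟨hC𝒳, hC𝒳_dom⟩ := hres C hC.1 𝒳
  obtain ⟨hC𝒴, hC𝒴_dom⟩ := hres C hC.1 𝒴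
  have hC𝒵_spec : IsFullSpec D.dom (causalPast (𝒜 ∪ 𝒳) ∩ causalPast (ℬ ∪ 𝒴)) C𝒵 := by
    rw [causalPast_union_exclusivePast, causalPast_union_exclusivePast]
    exact D.isFullSpec_restr hC subset_union_right (hres C hC.1 𝒵).1 (hres C hC.1 𝒵).2
  have hC𝒵_pos : μ C𝒵 ≠ 0 := (hpos.trans_le (measure_mono (subset_restr ..))).ne'
  have so1 {A' B' : Set Ω} :=
    h1.factorsGiven (A := A') (B := B') hsp.union_exclusivePast hC𝒵_spec hC𝒵_pos
  have hAC𝒳 := D.dom_inter_subset_union hA hC𝒳 hA𝒜 hC𝒳_dom (disjoint_self_exclusivePast 𝒜 ℬ)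
  have hBC𝒴 := D.dom_inter_subset_union hB hC𝒴 hBℬ hC𝒴_dom (disjoint_self_exclusivePast ℬ 𝒜)
  have hC𝒳' := hC𝒳_dom.trans (subset_union_right (s := 𝒜))
  have hC𝒴' := hC𝒴_dom.trans (subset_union_right (s := ℬ))
  rw [div_eq_div_mul_div_iff_factorsGiven hpos.ne' (measure_ne_top μ C), hC_eq]
  exact FactorsGiven.inter hC𝒵_pos (measure_ne_top μ _)
    (so1 (hA.inter hC𝒳) (hB.inter hC𝒴) hAC𝒳 hBC𝒴) (so1 (hA.inter hC𝒳) hC𝒴 hAC𝒳 hC𝒴')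
    (so1 hC𝒳 (hB.inter hC𝒴) hC𝒳' hBC𝒴) (so1 hC𝒳 hC𝒴 hC𝒳' hC𝒴')

/-- Claim 1: SO1 implies SO2, assuming every region has only finitely many full
specifications, singletons are events, and restrictions of events are events
decidable in the restricting region. -/
theorem stmt8 {Ω S : Type*} [MeasurableSpace Ω] [PartialOrder S]
    (D : DomSystem Ω S) (μ : Measure Ω) [IsProbabilityMeasure μ]
    (hfin : ∀ R : Set S, {F : Set Ω | IsFullSpec D.dom R F}.Finite)
    (hsing : ∀ ω : Ω, MeasurableSet ({ω} : Set Ω))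
    (hres : ∀ A : Set Ω, MeasurableSet A → ∀ R : Set S,
      MeasurableSet (restr D.dom R A) ∧ D.dom (restr D.dom R A) ⊆ R)
    (h1 : SO1 D.dom μ) : SO2 D.dom μ :=
  stmt8_general D μ hres h1
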